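/- arXiv:1312.1039 — 6 statements merged into one kernel-verified Lean document; each statement's English description precedes it below -/
import Mathlib

section
/- For Hermitian positive definite matrices A and B and t in [0,1], the weighted geometric mean A #_t B := A^{1/2}(A^{-1/2} B A^{-1/2})^t A^{1/2} satisfies A #_t B ⪯ (1-t)A + tB in the Löwner order. -/
set_option linter.unusedSectionVars false

namespace CGO

open Matrix
open scoped ComplexOrder

variable {n : Type*} [Fintype n] [DecidableEq n]

/-- The Löwner partial order `A ⪯ B` on matrices: `B - A` is positive semidefinite. -/
def LoewnerLE (A B : Matrix n n ℂ) : Prop := (B - A).PosSemidef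

lemma cfc_isHermitian {A : Matrix n n ℂ} (hA : A.IsHermitian) (f : ℝ → ℝ) :
    (hA.cfc f).IsHermitian := by
  rw [Matrix.IsHermitian.cfc, Unitary.conjStarAlgAut_apply, Matrix.star_eq_conjTranspose]
  exact Matrix.isHermitian_mul_mul_conjTranspose _
    (Matrix.isHermitian_diagonal_of_self_adjoint _ (by
      show star _ = _
      funext i; simp [Function.comp]))

/-- Real powers of a Hermitian matrix, defined through the spectral theorem
(for positive definite `A`, this is the usual power `A^t`). -/
noncomputable def mpow {A : Matrix n n ℂ} (hA : A.IsHermitian) (t : ℝ) : Matrix n n ℂ :=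
  hA.cfc (fun x => x ^ t)

lemma mpow_isHermitian {A : Matrix n n ℂ} (hA : A.IsHermitian) (t : ℝ) :
    (mpow hA t).IsHermitian := cfc_isHermitian hA _

lemma mul_mul_isHermitian {A B : Matrix n n ℂ} (hA : A.IsHermitian) (hB : B.IsHermitian) :
    (A * B * A).IsHermitian := by
  have h := Matrix.isHermitian_mul_mul_conjTranspose A hB
  rwa [hA.eq] at h

/-- The weighted matrix geometric mean `A #ₜ B := A^{1/2} (A^{-1/2} B A^{-1/2})^t A^{1/2}`.
The midpoint `t = 1/2` is the matrix geometric mean `A # B`. -/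
noncomputable def wgmean {A B : Matrix n n ℂ} (hA : A.PosDef) (hB : B.PosDef) (t : ℝ) :
    Matrix n n ℂ :=
  mpow hA.1 (1/2) *
    mpow (mul_mul_isHermitian (mpow_isHermitian hA.1 (-(1/2))) hB.1) t *
    mpow hA.1 (1/2)

lemma wgmean_isHermitian {A B : Matrix n n ℂ} (hA : A.PosDef) (hB : B.PosDef) (t : ℝ) :
    (wgmean hA hB t).IsHermitian := by
  have h := mul_mul_isHermitian (mpow_isHermitian hA.1 (1/2))
    (mpow_isHermitian (mul_mul_isHermitian (mpow_isHermitian hA.1 (-(1/2))) hB.1) t)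
  simpa [wgmean, mul_assoc] using h

/-!
Weighted AM–GM gives `x ^ t ≤ (1 - t) + t x` for `x ≥ 0`; through the continuous functional
calculus this becomes `C ^ t ≤ (1 - t) • 1 + t • C` for every positive `C`, in particular for
`C = A^{-1/2} B A^{-1/2}`. Conjugating by the self-adjoint `A^{1/2}` preserves the Löwner order
and turns the two sides into `A #ₜ B` and `(1 - t) • A + t • B`.
-/

section AffineBound

variable {𝔸 : Type*} [Ring 𝔸] [StarRing 𝔸] [Algebra ℝ 𝔸] [TopologicalSpace 𝔸] [PartialOrder 𝔸]
  [StarOrderedRing 𝔸] [ContinuousFunctionalCalculus ℝ 𝔸 IsSelfAdjoint] [NonnegSpectrumClass ℝ 𝔸]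

theorem cfc_rpow_le_one_sub_smul_one_add_smul {a : 𝔸} (ha : 0 ≤ a) {t : ℝ}
    (ht : t ∈ Set.Icc (0 : ℝ) 1) :
    cfc (fun x : ℝ => x ^ t) a ≤ (1 - t) • (1 : 𝔸) + t • a := by
  rw [← cfc_const_mul_id t a ha.isSelfAdjoint, ← Algebra.algebraMap_eq_smul_one,
    ← cfc_const_add (1 - t) _ a]
  refine cfc_mono fun x hx => ?_
  have := Real.geom_mean_le_arith_mean2_weighted (sub_nonneg.2 ht.2) ht.1 zero_le_one
    (spectrum_nonneg_of_nonneg ha hx) (by ring)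
  simpa using this

end AffineBound

open scoped MatrixOrder

section MatrixPower

variable {A : Matrix n n ℂ}

lemma mpow_eq_cfc (hA : A.IsHermitian) (t : ℝ) : mpow hA t = cfc (fun x : ℝ => x ^ t) A :=
  (hA.cfc_eq _).symm

lemma mpow_zero (hA : A.IsHermitian) : mpow hA 0 = 1 := by
  simpa [mpow_eq_cfc] using cfc_const_one ℝ A hA.isSelfAdjoint

lemma mpow_one (hA : A.IsHermitian) : mpow hA 1 = A := by
  simpa [mpow_eq_cfc] using cfc_id' ℝ A hA.isSelfAdjoint

lemma mpow_add (hA : A.PosDef) (s t : ℝ) :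
    mpow hA.1 (s + t) = mpow hA.1 s * mpow hA.1 t := by
  simp only [mpow_eq_cfc]
  rw [← cfc_mul _ _ _ (A.finite_real_spectrum.continuousOn _)
    (A.finite_real_spectrum.continuousOn _)]
  exact cfc_congr fun x hx => Real.rpow_add (hA.isStrictlyPositive.spectrum_pos hx) s t

end MatrixPower

/-- For HPD `A`, `B` and `t ∈ [0,1]`, `A #ₜ B ⪯ (1-t)A + tB`. -/
theorem wgmean_loewnerLE_arith {A B : Matrix n n ℂ} (hA : A.PosDef) (hB : B.PosDef)
    {t : ℝ} (ht : t ∈ Set.Icc (0 : ℝ) 1) :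
    LoewnerLE (wgmean hA hB t) ((1 - t) • A + t • B) := by
  set S := mpow hA.1 (1 / 2)
  set M := mpow hA.1 (-(1 / 2))
  have hS : IsSelfAdjoint S := (mpow_isHermitian hA.1 _).isSelfAdjoint
  have hSS : S * S = A := by rw [← mpow_add hA, add_halves, mpow_one]
  have hSM : S * M = 1 := by rw [← mpow_add hA, add_neg_cancel, mpow_zero]
  have hMS : M * S = 1 := by rw [← mpow_add hA, neg_add_cancel, mpow_zero]
  have hC : 0 ≤ M * B * M :=
    (mpow_isHermitian hA.1 _).isSelfAdjoint.conjugate_nonneg hB.posSemidef.nonneg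
  have hSCS : S * (M * B * M) * S = B := by
    rw [← mul_assoc, ← mul_assoc, hSM, one_mul, mul_assoc, hMS, mul_one]
  rw [LoewnerLE, ← Matrix.le_iff]
  calc wgmean hA hB t = S * cfc (fun x : ℝ => x ^ t) (M * B * M) * S := by
        rw [wgmean, mpow_eq_cfc (A := M * B * M)]
    _ ≤ S * ((1 - t) • 1 + t • (M * B * M)) * S :=
        hS.conjugate_le_conjugate (cfc_rpow_le_one_sub_smul_one_add_smul hC ht)
    _ = (1 - t) • A + t • B := by
        rw [mul_add, add_mul, mul_smul_comm, smul_mul_assoc, mul_one, hSS, mul_smul_comm,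
          smul_mul_assoc, hSCS]

end CGO
end

section
/- Let Φ be a positive linear map between spaces of Hermitian matrices. Then for Hermitian positive definite A, B, the parallel sum satisfies Φ(A : B) ⪯ Φ(A) : Φ(B), where A : B := (A^{-1} + B^{-1})^{-1}. -/
/-!
Since `(A⁻¹ + B⁻¹)⁻¹ = B - B (A + B)⁻¹ B` for both pairs `A, B` and `Φ A, Φ B`, the claim is the
Schwarz-type inequality `Φ Y (Φ X)⁻¹ Φ Y ⪯ Φ (Y X⁻¹ Y)` for `X = A + B` and `Y = B`.
A positive map satisfies it whenever `X` is positive definite and `Y` Hermitian: writing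
`X = Eᴴ E` and diagonalising `(E⁻¹)ᴴ Y E⁻¹`, one finds positive semidefinite `M j` and reals `c j`
with `X = ∑ M j`, `Y = ∑ c j M j` and `Y X⁻¹ Y = ∑ c j² M j`. This shape survives `Φ`, and for
positive semidefinite `N j` with `T = ∑ N j` invertible and `R = ∑ c j N j`,
`∑ (c j - T⁻¹ R)ᴴ N j (c j - T⁻¹ R) = ∑ c j² N j - R T⁻¹ R`.
-/

set_option linter.unusedSectionVars false

namespace CGO

open Matrix
open scoped ComplexOrder

variable {n : Type*} [Fintype n] [DecidableEq n]

theorem _root_.Matrix.inv_add_inv_inv_eq_sub {α ι : Type*} [CommRing α] [Fintype ι]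
    [DecidableEq ι] {A B : Matrix ι ι α} (hA : IsUnit A) (hB : IsUnit B) (hAB : IsUnit (A + B)) :
    (A⁻¹ + B⁻¹)⁻¹ = B - B * (A + B)⁻¹ * B := by
  have hdet {M : Matrix ι ι α} (hM : IsUnit M) : IsUnit M.det := (isUnit_iff_isUnit_det M).mp hM
  calc (A⁻¹ + B⁻¹)⁻¹ = B * (A + B)⁻¹ * ((A + B) - B) := by
        rw [inv_add_inv (iff_of_true hA hB), Matrix.mul_inv_rev, Matrix.mul_inv_rev,
          nonsing_inv_nonsing_inv _ (hdet hA), nonsing_inv_nonsing_inv _ (hdet hB),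
          add_sub_cancel_right, Matrix.mul_assoc]
    _ = B - B * (A + B)⁻¹ * B := by
        rw [Matrix.mul_sub, nonsing_inv_mul_cancel_right _ _ (hdet hAB)]

theorem _root_.Matrix.sum_smul_mul_single_mul {α ι l o : Type*} [CommSemiring α] [Fintype ι]
    [DecidableEq ι] [Fintype l] [Fintype o] (U : Matrix l ι α) (V : Matrix ι o α) (d : ι → α) :
    ∑ j, d j • (U * single j j (1 : α) * V) = U * diagonal d * V := by
  rw [← sum_single_eq_diagonal, Matrix.mul_sum, Matrix.sum_mul]
  refine Finset.sum_congr rfl fun j _ ↦ ?_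
  rw [← Matrix.smul_mul, ← Matrix.mul_smul, smul_single, smul_eq_mul, mul_one]

section RCLike

variable {𝕜 : Type*} [RCLike 𝕜] {m : Type*} [Fintype m] [DecidableEq m]

theorem _root_.Matrix.IsHermitian.exists_spectral_decomposition {S : Matrix m m 𝕜}
    (hS : S.IsHermitian) :
    ∃ (P : m → Matrix m m 𝕜) (c : m → ℝ), (∀ j, (P j).PosSemidef) ∧ ∑ j, P j = 1 ∧
      ∑ j, (c j : 𝕜) • P j = S ∧ ∑ j, ((c j : 𝕜) ^ 2) • P j = S * S := by
  set U : Matrix m m 𝕜 := (hS.eigenvectorUnitary : Matrix m m 𝕜)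
  set D : Matrix m m 𝕜 := diagonal fun j ↦ (hS.eigenvalues j : 𝕜)
  have hUU : star U * U = 1 := Unitary.coe_star_mul_self _
  have hUU' : U * star U = 1 := Unitary.coe_mul_star_self _
  have hSUD : S = U * D * star U := hS.spectral_theorem
  have hsingle (j : m) : (single j j (1 : 𝕜)).PosSemidef := by
    simpa [← single_eq_single_vecMulVec_single] using
      posSemidef_vecMulVec_self_star (Pi.single j (1 : 𝕜))
  refine ⟨fun j ↦ U * single j j 1 * star U, hS.eigenvalues, fun j ↦ ?_, ?_, ?_, ?_⟩
  · simpa [star_eq_conjTranspose] using (hsingle j).conjTranspose_mul_mul_same (star U)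
  · simpa [hUU'] using sum_smul_mul_single_mul U (star U) 1
  · exact (sum_smul_mul_single_mul U (star U) _).trans hSUD.symm
  · calc _ = U * (D * D) * star U := by
          rw [sum_smul_mul_single_mul, diagonal_mul_diagonal]
          simp only [sq]
      _ = U * D * (star U * U) * D * star U := by
          simp only [hUU, Matrix.mul_one, Matrix.mul_assoc]
      _ = S * S := by rw [hSUD]; simp only [Matrix.mul_assoc]

theorem _root_.Matrix.PosDef.exists_posSemidef_decomposition {X Y : Matrix m m 𝕜}
    (hX : X.PosDef) (hY : Y.IsHermitian) :
    ∃ (M : m → Matrix m m 𝕜) (c : m → ℝ), (∀ j, (M j).PosSemidef) ∧ ∑ j, M j = X ∧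
      ∑ j, (c j : 𝕜) • M j = Y ∧ ∑ j, ((c j : 𝕜) ^ 2) • M j = Y * X⁻¹ * Y := by
  obtain ⟨E, hXE⟩ : ∃ E : Matrix m m 𝕜, X = Eᴴ * E := by
    open scoped MatrixOrder in
    exact CStarAlgebra.nonneg_iff_eq_star_mul_self.mp hX.posSemidef.nonneg
  have hE : IsUnit E.det := by
    have hXdet := (isUnit_iff_isUnit_det X).mp hX.isUnit
    rw [hXE, det_mul] at hXdet
    exact isUnit_of_mul_isUnit_right hXdet
  have hEE : E⁻¹ * E = 1 := nonsing_inv_mul E hE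
  have hEE' : Eᴴ * E⁻¹ᴴ = 1 := by rw [← conjTranspose_mul, hEE, conjTranspose_one]
  obtain ⟨P, c, hP, hP1, hPc, hPc2⟩ :=
    (isHermitian_conjTranspose_mul_mul E⁻¹ hY).exists_spectral_decomposition
  have hconj (d : m → 𝕜) : ∑ j, d j • (Eᴴ * P j * E) = Eᴴ * (∑ j, d j • P j) * E := by
    simp [Matrix.mul_sum, Matrix.sum_mul]
  refine ⟨fun j ↦ Eᴴ * P j * E, c, fun j ↦ (hP j).conjTranspose_mul_mul_same E, ?_, ?_, ?_⟩
  · simpa [hP1, hXE] using hconj 1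
  · rw [hconj, hPc]
    simp only [← Matrix.mul_assoc, hEE', Matrix.one_mul]
    simp only [Matrix.mul_assoc, hEE, Matrix.mul_one]
  · rw [hconj, hPc2, hXE, Matrix.mul_inv_rev, ← conjTranspose_nonsing_inv]
    simp only [← Matrix.mul_assoc, hEE', Matrix.one_mul]
    simp only [Matrix.mul_assoc, hEE, Matrix.mul_one]

theorem _root_.Matrix.posSemidef_sum_sq_smul_sub_mul_inv_mul {ι : Type*} [Fintype ι]
    {N : ι → Matrix m m 𝕜} (hN : ∀ j, (N j).PosSemidef) (c : ι → ℝ) (hT : IsUnit (∑ j, N j)) :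
    (∑ j, ((c j : 𝕜) ^ 2) • N j
      - (∑ j, (c j : 𝕜) • N j) * (∑ j, N j)⁻¹ * (∑ j, (c j : 𝕜) • N j)).PosSemidef := by
  set T := ∑ j, N j
  set R := ∑ j, (c j : 𝕜) • N j
  set s := T⁻¹ * R
  have hTinv : T⁻¹ * T = 1 := nonsing_inv_mul T ((isUnit_iff_isUnit_det T).mp hT)
  have hTherm : T.IsHermitian := (posSemidef_sum _ fun j _ ↦ hN j).isHermitian
  have hR : R.IsHermitian :=
    isSelfAdjoint_sum _ fun j _ ↦ (hN j).isHermitian.smul (RCLike.conj_ofReal (c j))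
  have hs : sᴴ = R * T⁻¹ := by rw [conjTranspose_mul, hR.eq, hTherm.inv.eq]
  have hterm (j : ι) : ((c j : 𝕜) • 1 - s)ᴴ * N j * ((c j : 𝕜) • 1 - s) =
      ((c j : 𝕜) ^ 2) • N j - ((c j : 𝕜) • N j) * s - sᴴ * ((c j : 𝕜) • N j) + sᴴ * N j * s := by
    simp only [conjTranspose_sub, conjTranspose_smul, conjTranspose_one, RCLike.star_def,
      RCLike.conj_ofReal, sub_mul, mul_sub, Matrix.smul_mul, Matrix.mul_smul, Matrix.one_mul,
      Matrix.mul_one, smul_smul, sq]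
    abel
  have hsum : ∑ j, ((c j : 𝕜) • 1 - s)ᴴ * N j * ((c j : 𝕜) • 1 - s) =
      ∑ j, ((c j : 𝕜) ^ 2) • N j - R * T⁻¹ * R := by
    simp only [hterm, Finset.sum_add_distrib, Finset.sum_sub_distrib, ← Finset.sum_mul,
      ← Finset.mul_sum, hs]
    change _ - R * s - R * T⁻¹ * R + R * T⁻¹ * T * s = _
    rw [Matrix.mul_assoc R T⁻¹ T, hTinv, Matrix.mul_one]
    abel
  rw [← hsum]
  exact posSemidef_sum _ fun j _ ↦ (hN j).conjTranspose_mul_mul_same _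

theorem posSemidef_map_mul_inv_mul_sub {p : Type*} [Fintype p] [DecidableEq p]
    {Φ : Matrix m m 𝕜 →ₗ[𝕜] Matrix p p 𝕜} (hΦ : ∀ M, M.PosSemidef → (Φ M).PosSemidef)
    {X Y : Matrix m m 𝕜} (hX : X.PosDef) (hY : Y.IsHermitian) (hΦX : IsUnit (Φ X)) :
    (Φ (Y * X⁻¹ * Y) - Φ Y * (Φ X)⁻¹ * Φ Y).PosSemidef := by
  obtain ⟨M, c, hM, hMX, hMY, hMZ⟩ := hX.exists_posSemidef_decomposition hY
  rw [← hMZ]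
  subst hMX hMY
  simp only [map_sum, map_smul] at hΦX ⊢
  exact posSemidef_sum_sq_smul_sub_mul_inv_mul (fun j ↦ hΦ _ (hM j)) c hΦX

end RCLike

/-- A positive linear map is subadditive w.r.t. the parallel sum:
`Φ(A : B) ⪯ Φ(A) : Φ(B)` where `A : B = (A⁻¹ + B⁻¹)⁻¹`. -/
theorem positive_map_parallel_sum {k : Type*} [Fintype k] [DecidableEq k]
    (Φ : Matrix n n ℂ →ₗ[ℂ] Matrix k k ℂ)
    (hpos : ∀ M : Matrix n n ℂ, M.PosSemidef → (Φ M).PosSemidef)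
    (hspos : ∀ M : Matrix n n ℂ, M.PosDef → (Φ M).PosDef)
    {A B : Matrix n n ℂ} (hA : A.PosDef) (hB : B.PosDef) :
    LoewnerLE (Φ ((A⁻¹ + B⁻¹)⁻¹)) (((Φ A)⁻¹ + (Φ B)⁻¹)⁻¹) := by
  have hAB : (A + B).PosDef := hA.add hB
  have hΦAB : (Φ (A + B)).PosDef := hspos _ hAB
  have schwarz := posSemidef_map_mul_inv_mul_sub hpos hAB hB.isHermitian hΦAB.isUnit
  rw [map_add] at schwarz hΦAB
  unfold LoewnerLE
  rw [inv_add_inv_inv_eq_sub hA.isUnit hB.isUnit hAB.isUnit,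
    inv_add_inv_inv_eq_sub (hspos A hA).isUnit (hspos B hB).isUnit hΦAB.isUnit, map_sub,
    sub_sub_sub_cancel_left]
  exact schwarz

end CGO
end

section
/- Let Φ : P_d → P_k be a strictly positive linear map. Then for all Hermitian positive definite A, B and all t ∈ [0,1], Φ(A #_t B) ⪯ Φ(A) #_t Φ(B). -/
set_option linter.unusedSectionVars false

namespace CGO

open Matrix
open scoped ComplexOrder

variable {n : Type*} [Fintype n] [DecidableEq n]

/-!
Diagonalising `C = A^{-1/2} B A^{-1/2} = ∑ cᵢ Pᵢ` gives `A = ∑ Sᵢ`, `B = ∑ cᵢ Sᵢ` and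
`A #ₜ B = ∑ cᵢ^t Sᵢ` with `Sᵢ = A^{1/2} Pᵢ A^{1/2} ⪰ 0`. After applying `Φ` and conjugating by
`Φ(A)^{-1/2}`, the claim becomes Jensen's operator inequality `∑ cᵢ^t Rᵢ ⪯ (∑ cᵢ Rᵢ)^t` for
positive `Rᵢ` summing to `1`. The integral representation `x^t = ∫ s^t (s⁻¹ - (s + x)⁻¹) dμ(s)`
reduces this to the resolvent inequality `(∑ xᵢ Rᵢ)⁻¹ ⪯ ∑ xᵢ⁻¹ Rᵢ`, whose two sides differ by
`∑ xᵢ⁻¹ (1 - xᵢ Z) Rᵢ (1 - xᵢ Z) ⪰ 0`, where `Z = (∑ xᵢ Rᵢ)⁻¹`.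
-/

section CStarAlgebra

open MeasureTheory Set Real

variable {A : Type*} [CStarAlgebra A] [PartialOrder A] [StarOrderedRing A]
variable {ι : Type*} [Fintype ι]

theorem ringInverse_sum_smul_le_sum_inv_smul {R : ι → A} (hR : ∀ i, 0 ≤ R i)
    (hsum : ∑ i, R i = 1) {x : ι → ℝ} (hx : ∀ i, 0 < x i) :
    Ring.inverse (∑ i, x i • R i) ≤ ∑ i, (x i)⁻¹ • R i := by
  set X := ∑ i, x i • R i
  by_cases hX : IsUnit X
  swap
  · rw [Ring.inverse_non_unit X hX]
    exact Finset.sum_nonneg fun i _ => smul_nonneg (inv_nonneg.2 (hx i).le) (hR i)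
  set Z := Ring.inverse X
  have hZ : IsSelfAdjoint Z := (IsSelfAdjoint.of_nonneg
    (Finset.sum_nonneg fun i _ => smul_nonneg (hx i).le (hR i))).ringInverse
  have hXZ : X * Z = 1 := Ring.mul_inverse_cancel X hX
  have hterm : ∀ i, (x i)⁻¹ • (star (1 - x i • Z) * R i * (1 - x i • Z))
      = (x i)⁻¹ • R i - (R i * Z + Z * R i) + Z * (x i • R i) * Z := fun i => by
    have hxi := (hx i).ne'
    simp only [star_sub, star_one, star_smul, star_trivial, hZ.star_eq, mul_sub, sub_mul, one_mul,
      mul_one, smul_mul_assoc, mul_smul_comm, smul_sub, smul_smul, inv_mul_cancel₀ hxi,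
      inv_mul_cancel_left₀ hxi, one_smul]
    abel
  have hdiff : ∑ i, (x i)⁻¹ • (star (1 - x i • Z) * R i * (1 - x i • Z))
      = ∑ i, (x i)⁻¹ • R i - Z := by
    rw [Finset.sum_congr rfl fun i _ => hterm i, Finset.sum_add_distrib, Finset.sum_sub_distrib,
      Finset.sum_add_distrib, ← Finset.sum_mul, ← Finset.mul_sum, ← Finset.sum_mul,
      ← Finset.mul_sum, hsum, mul_assoc, hXZ]
    noncomm_ring
  rw [← sub_nonneg, ← hdiff]
  exact Finset.sum_nonneg fun i _ =>
    smul_nonneg (inv_nonneg.2 (hx i).le) (star_left_conjugate_nonneg (hR i) _)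

theorem cfc_rpowIntegrand₀₁_eq {p s : ℝ} (hp : p ≠ 1) (hs : 0 < s) {a : A} (ha : 0 ≤ a) :
    cfc (rpowIntegrand₀₁ p s) a
      = algebraMap ℝ A (s ^ (p - 1)) - s ^ p • Ring.inverse (algebraMap ℝ A s + a) := by
  have hspec : ∀ r ∈ spectrum ℝ a, s + r ≠ 0 := fun r hr =>
    (add_pos_of_pos_of_nonneg hs (spectrum_nonneg_of_nonneg ha hr)).ne'
  have hcont : ContinuousOn (fun r : ℝ => (s + r)⁻¹) (spectrum ℝ a) :=
    continuousOn_const.add continuousOn_id |>.inv₀ hspec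
  rw [rpowIntegrand₀₁_eq_sub hp hs,
    cfc_sub (fun _ => s ^ (p - 1)) (fun r => s ^ p * (s + r)⁻¹) a continuousOn_const
      (continuousOn_const.mul hcont),
    cfc_const .., cfc_const_mul _ _ a hcont, cfc_inv _ _ hspec, cfc_const_add .., cfc_id' ..]

theorem sum_rpowIntegrand₀₁_smul_le_cfc {R : ι → A} (hR : ∀ i, 0 ≤ R i)
    (hsum : ∑ i, R i = 1) {c : ι → ℝ} (hc : ∀ i, 0 ≤ c i) {p s : ℝ} (hp : p ≠ 1) (hs : 0 < s) :
    ∑ i, rpowIntegrand₀₁ p s (c i) • R i ≤ cfc (rpowIntegrand₀₁ p s) (∑ i, c i • R i) := by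
  have hscalar : ∀ r : ℝ, algebraMap ℝ A r = ∑ i, r • R i := fun r => by
    rw [← Finset.smul_sum, hsum, Algebra.algebraMap_eq_smul_one]
  have hshift : algebraMap ℝ A s + ∑ i, c i • R i = ∑ i, (s + c i) • R i := by
    simp only [hscalar, add_smul, Finset.sum_add_distrib]
  rw [cfc_rpowIntegrand₀₁_eq hp hs (Finset.sum_nonneg fun i _ => smul_nonneg (hc i) (hR i)),
    hshift, rpowIntegrand₀₁_eq_sub hp hs, hscalar]
  simp only [sub_smul, mul_smul, Finset.sum_sub_distrib, ← Finset.smul_sum]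
  gcongr
  exact ringInverse_sum_smul_le_sum_inv_smul hR hsum fun i => add_pos_of_pos_of_nonneg hs (hc i)

variable (A) in
theorem exists_measure_rpow_eq_integral_cfc_rpowIntegrand₀₁ {p : ℝ} (hp : p ∈ Ioo 0 1) :
    ∃ μ : Measure ℝ, ∀ a ∈ Ici (0 : A),
      IntegrableOn (fun s => cfc (rpowIntegrand₀₁ p s) a) (Ioi 0) μ
        ∧ a ^ p = ∫ s in Ioi 0, cfc (rpowIntegrand₀₁ p s) a ∂μ := by
  lift p to NNReal using hp.1.le
  obtain ⟨μ, hμ⟩ := CFC.exists_measure_nnrpow_eq_integral_cfcₙ_rpowIntegrand₀₁ A hp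
  refine ⟨μ, fun a ha => ?_⟩
  have hcfc : EqOn (fun s => cfcₙ (rpowIntegrand₀₁ p s) a) (fun s => cfc (rpowIntegrand₀₁ p s) a)
      (Ioi 0) := fun s hs =>
    cfcₙ_eq_cfc ((continuousOn_rpowIntegrand₀₁_Ici hp hs).mono
      fun r hr => NonnegSpectrumClass.quasispectrum_nonneg_of_nonneg a ha r hr)
  obtain ⟨hint, heq⟩ := hμ a ha
  exact ⟨hint.congr_fun hcfc measurableSet_Ioi,
    by rw [← CFC.nnrpow_eq_rpow hp.1, heq, setIntegral_congr_fun measurableSet_Ioi hcfc]⟩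

theorem sum_rpow_smul_le_rpow_sum_smul {R : ι → A} (hR : ∀ i, 0 ≤ R i)
    (hsum : ∑ i, R i = 1) {c : ι → ℝ} (hc : ∀ i, 0 ≤ c i) {p : ℝ} (hp : p ∈ Icc 0 1) :
    ∑ i, c i ^ p • R i ≤ (∑ i, c i • R i) ^ p := by
  have hD : 0 ≤ ∑ i, c i • R i := Finset.sum_nonneg fun i _ => smul_nonneg (hc i) (hR i)
  rcases hp.1.eq_or_lt with rfl | hp0
  · simp [hsum, CFC.rpow_zero _ hD]
  rcases hp.2.eq_or_lt with rfl | hp1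
  · simp [CFC.rpow_one _ hD]
  obtain ⟨μ, hμ⟩ := exists_measure_rpow_eq_integral_cfc_rpowIntegrand₀₁ A ⟨hp0, hp1⟩
  -- `μ` also represents the scalars: apply it to `algebraMap ℝ A (c i)`
  have hterm : ∀ i, IntegrableOn (fun s => rpowIntegrand₀₁ p s (c i) • R i) (Ioi 0) μ
      ∧ c i ^ p • R i = ∫ s in Ioi 0, rpowIntegrand₀₁ p s (c i) • R i ∂μ := fun i => by
    have hci : 0 ≤ algebraMap ℝ A (c i) := algebraMap_nonneg A (hc i)
    obtain ⟨hint, heq⟩ := hμ _ hci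
    rw [CFC.rpow_eq_cfc_real hci] at heq
    simp only [cfc_algebraMap] at hint heq
    simp only [Algebra.smul_def]
    exact ⟨hint.mul_const _, by rw [integral_mul_const_of_integrable hint, ← heq]⟩
  obtain ⟨hDint, hDeq⟩ := hμ _ hD
  calc ∑ i, c i ^ p • R i = ∫ s in Ioi 0, ∑ i, rpowIntegrand₀₁ p s (c i) • R i ∂μ := by
        rw [integral_finsetSum _ fun i _ => (hterm i).1]
        exact Finset.sum_congr rfl fun i _ => (hterm i).2
    _ ≤ ∫ s in Ioi 0, cfc (rpowIntegrand₀₁ p s) (∑ i, c i • R i) ∂μ :=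
        setIntegral_mono_on (integrable_finsetSum _ fun i _ => (hterm i).1) hDint
          measurableSet_Ioi fun s hs => sum_rpowIntegrand₀₁_smul_le_cfc hR hsum hc hp1.ne hs
    _ = (∑ i, c i • R i) ^ p := hDeq.symm

theorem rpow_half_mul_rpow_half {a : A} (ha : 0 ≤ a) : a ^ (1 / 2 : ℝ) * a ^ (1 / 2 : ℝ) = a := by
  rw [← CFC.sqrt_eq_rpow, CFC.sqrt_mul_sqrt_self a ha]

end CStarAlgebra

theorem mul_mul_mul_cancel_of_mul_eq_one {R : Type*} [Ring R] {a b : R} (hab : a * b = 1)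
    (hba : b * a = 1) (m : R) : a * (b * m * b) * a = m := by
  rw [← mul_assoc, ← mul_assoc, hab, one_mul, mul_assoc, hba, mul_one]

open scoped MatrixOrder

section Spectral

variable {𝕜 : Type*} [RCLike 𝕜] {H : Matrix n n 𝕜}

noncomputable def spectralProjection (hH : H.IsHermitian) (i : n) : Matrix n n 𝕜 :=
  (hH.eigenvectorUnitary : Matrix n n 𝕜) * diagonal (Pi.single i 1) *
    star (hH.eigenvectorUnitary : Matrix n n 𝕜)

theorem spectralProjection_nonneg (hH : H.IsHermitian) (i : n) : 0 ≤ spectralProjection hH i := by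
  refine (PosSemidef.mul_mul_conjTranspose_same (PosSemidef.diagonal fun j => ?_) _).nonneg
  rcases eq_or_ne j i with rfl | h <;> simp [*]

theorem cfc_eq_sum_smul_spectralProjection (hH : H.IsHermitian) (f : ℝ → ℝ) :
    cfc f H = ∑ i, f (hH.eigenvalues i) • spectralProjection hH i := by
  have hdiag : diagonal (RCLike.ofReal ∘ f ∘ hH.eigenvalues)
      = ∑ i, f (hH.eigenvalues i) • diagonal (Pi.single i (1 : 𝕜)) := by
    ext j k
    rcases eq_or_ne j k with rfl | h
    · simp [Matrix.sum_apply, Pi.single_apply, RCLike.real_smul_eq_coe_mul]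
    · simp [Matrix.sum_apply, h]
  simp only [hH.cfc_eq, IsHermitian.cfc, Unitary.conjStarAlgAut_apply, hdiag, spectralProjection,
    Finset.mul_sum, Finset.sum_mul, mul_smul_comm, smul_mul_assoc]

end Spectral

theorem mpow_eq_rpow {A : Matrix n n ℂ} (hA : A.IsHermitian) (hA0 : 0 ≤ A) (t : ℝ) :
    mpow hA t = A ^ t := by
  rw [CFC.rpow_eq_cfc_real hA0, hA.cfc_eq]
  rfl

theorem wgmean_eq_rpow {A B : Matrix n n ℂ} (hA : A.PosDef) (hB : B.PosDef) (t : ℝ) :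
    wgmean hA hB t = A ^ (1 / 2 : ℝ) * (A ^ (-(1 / 2) : ℝ) * B * A ^ (-(1 / 2) : ℝ)) ^ t
      * A ^ (1 / 2 : ℝ) := by
  have hC : 0 ≤ A ^ (-(1 / 2) : ℝ) * B * A ^ (-(1 / 2) : ℝ) :=
    conjugate_nonneg_of_nonneg hB.posSemidef.nonneg CFC.rpow_nonneg
  have hmpow := mpow_eq_rpow hA.1 hA.posSemidef.nonneg
  rw [wgmean, mpow_eq_rpow (A := mpow hA.1 (-(1 / 2)) * B * mpow hA.1 (-(1 / 2))) _
    (by rwa [hmpow]), hmpow, hmpow]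

open scoped Matrix.Norms.L2Operator in
theorem exists_wgmean_eq_sum_rpow_smul {A B : Matrix n n ℂ} (hA : A.PosDef) (hB : B.PosDef) :
    ∃ (c : n → ℝ) (S : n → Matrix n n ℂ), (∀ i, 0 ≤ c i) ∧ (∀ i, 0 ≤ S i) ∧
      A = ∑ i, S i ∧ B = ∑ i, c i • S i ∧ ∀ t, wgmean hA hB t = ∑ i, c i ^ t • S i := by
  set a := A ^ (1 / 2 : ℝ)
  set a' := A ^ (-(1 / 2) : ℝ)
  set C := a' * B * a'
  have hC : 0 ≤ C := conjugate_nonneg_of_nonneg hB.posSemidef.nonneg CFC.rpow_nonneg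
  have hCH : C.IsHermitian := hC.posSemidef.1
  have hsum : ∀ f : ℝ → ℝ, a * cfc f C * a
      = ∑ i, f (hCH.eigenvalues i) • (a * spectralProjection hCH i * a) := fun f => by
    simp only [cfc_eq_sum_smul_spectralProjection hCH, Finset.mul_sum, Finset.sum_mul,
      mul_smul_comm, smul_mul_assoc]
  refine ⟨hCH.eigenvalues, fun i => a * spectralProjection hCH i * a,
    hC.posSemidef.eigenvalues_nonneg,
    fun i => conjugate_nonneg_of_nonneg (spectralProjection_nonneg hCH i) CFC.rpow_nonneg,
    ?_, ?_, fun t => ?_⟩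
  · have haa : a * a = A := rpow_half_mul_rpow_half hA.posSemidef.nonneg
    simpa [cfc_const_one ℝ C, haa] using hsum fun _ => 1
  · rw [← hsum fun r => r, cfc_id' ℝ C, mul_mul_mul_cancel_of_mul_eq_one
      (CFC.rpow_mul_rpow_neg _ hA.isStrictlyPositive)
      (CFC.rpow_neg_mul_rpow _ hA.isStrictlyPositive)]
  · rw [wgmean_eq_rpow, CFC.rpow_eq_cfc_real hC, hsum]

open scoped Matrix.Norms.L2Operator in
theorem sum_rpow_smul_le_wgmean {ι : Type*} [Fintype ι] {X Y : Matrix n n ℂ} (hX : X.PosDef)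
    (hY : Y.PosDef) {Q : ι → Matrix n n ℂ} (hQ : ∀ i, 0 ≤ Q i) {c : ι → ℝ}
    (hc : ∀ i, 0 ≤ c i) (hXQ : X = ∑ i, Q i) (hYQ : Y = ∑ i, c i • Q i) {t : ℝ}
    (ht : t ∈ Set.Icc (0 : ℝ) 1) :
    ∑ i, c i ^ t • Q i ≤ wgmean hX hY t := by
  set x := X ^ (1 / 2 : ℝ)
  set x' := X ^ (-(1 / 2) : ℝ)
  have hxx' : x * x' = 1 := CFC.rpow_mul_rpow_neg _ hX.isStrictlyPositive
  have hx'x : x' * x = 1 := CFC.rpow_neg_mul_rpow _ hX.isStrictlyPositive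
  have hQR : ∀ M, M = x * (x' * M * x') * x := fun M =>
    (mul_mul_mul_cancel_of_mul_eq_one hxx' hx'x M).symm
  have hR : ∀ i, 0 ≤ x' * Q i * x' := fun i => conjugate_nonneg_of_nonneg (hQ i) CFC.rpow_nonneg
  have hRsum : ∑ i, x' * Q i * x' = 1 := by
    have hxx : x * x = X := rpow_half_mul_rpow_half hX.posSemidef.nonneg
    rw [← Finset.sum_mul, ← Finset.mul_sum, ← hXQ, ← hxx, ← mul_assoc, hx'x, one_mul, hxx']
  have hRc : ∑ i, c i • (x' * Q i * x') = x' * Y * x' := by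
    simp only [hYQ, Finset.mul_sum, Finset.sum_mul, mul_smul_comm, smul_mul_assoc]
  calc ∑ i, c i ^ t • Q i = x * (∑ i, c i ^ t • (x' * Q i * x')) * x := by
        simp only [Finset.mul_sum, Finset.sum_mul, mul_smul_comm, smul_mul_assoc, ← hQR]
    _ ≤ x * (∑ i, c i • (x' * Q i * x')) ^ t * x :=
        IsSelfAdjoint.conjugate_le_conjugate (sum_rpow_smul_le_rpow_sum_smul hR hRsum hc ht)
          CFC.rpow_nonneg.isSelfAdjoint
    _ = wgmean hX hY t := by rw [hRc, wgmean_eq_rpow]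

/-- For a strictly positive linear map `Φ`,
`Φ(A #ₜ B) ⪯ Φ(A) #ₜ Φ(B)` for all `t ∈ [0,1]`. -/
theorem positive_map_wgmean {k : Type*} [Fintype k] [DecidableEq k]
    (Φ : Matrix n n ℂ →ₗ[ℂ] Matrix k k ℂ)
    (hpos : ∀ M : Matrix n n ℂ, M.PosSemidef → (Φ M).PosSemidef)
    (hspos : ∀ M : Matrix n n ℂ, M.PosDef → (Φ M).PosDef)
    {A B : Matrix n n ℂ} (hA : A.PosDef) (hB : B.PosDef)
    {t : ℝ} (ht : t ∈ Set.Icc (0 : ℝ) 1) :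
    LoewnerLE (Φ (wgmean hA hB t)) (wgmean (hspos A hA) (hspos B hB) t) := by
  obtain ⟨c, S, hc, hS, hAS, hBS, hW⟩ := exists_wgmean_eq_sum_rpow_smul hA hB
  have hΦ : ∀ g : n → ℝ, Φ (∑ i, g i • S i) = ∑ i, g i • Φ (S i) := fun g => by
    simp only [map_sum, LinearMap.map_smul_of_tower]
  rw [LoewnerLE, ← Matrix.le_iff, hW, hΦ]
  exact sum_rpow_smul_le_wgmean _ _ (fun i => (hpos _ (hS i).posSemidef).nonneg) hc
    (by rw [hAS, map_sum]) (by rw [hBS, hΦ]) ht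

end CGO
end

section
/- The map A ↦ log ∑_{i=1}^n exp(λ_i(A)) on Hermitian positive definite matrices is geodesically midpoint convex: log ∑_i e^{λ_i(A#B)} ≤ (1/2) log ∑_i e^{λ_i(A)} + (1/2) log ∑_i e^{λ_i(B)}. -/
set_option linter.unusedSectionVars false

namespace CGO

open Matrix
open scoped ComplexOrder
open scoped ComplexConjugate InnerProductSpace
open Finset

variable {n : Type*} [Fintype n] [DecidableEq n]

set_option maxHeartbeats 1000000


lemma cfc_mul {A : Matrix n n ℂ} (hA : A.IsHermitian) (f g : ℝ → ℝ) :
    hA.cfc f * hA.cfc g = hA.cfc (fun x => f x * g x) := by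
  unfold Matrix.IsHermitian.cfc
  simp only [Unitary.conjStarAlgAut_apply, Unitary.coe_star]
  have h1 : (star (hA.eigenvectorUnitary : Matrix n n ℂ)) * (hA.eigenvectorUnitary : Matrix n n ℂ) = 1 :=
    hA.eigenvectorUnitary.2.1
  rw [show ∀ (U D1 D2 V : Matrix n n ℂ), U*D1*V*(U*D2*V) = U*(D1*((V*U)*D2))*V by
    intros; simp only [mul_assoc], h1, one_mul, diagonal_mul_diagonal]
  have : (fun i => ((RCLike.ofReal : ℝ → ℂ) ∘ f ∘ hA.eigenvalues) i * ((RCLike.ofReal : ℝ → ℂ) ∘ g ∘ hA.eigenvalues) i)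
      = (RCLike.ofReal : ℝ → ℂ) ∘ (fun x => f x * g x) ∘ hA.eigenvalues := by
    funext i; simp [Function.comp]
  rw [this]

lemma cfc_add {A : Matrix n n ℂ} (hA : A.IsHermitian) (f g : ℝ → ℝ) :
    hA.cfc f + hA.cfc g = hA.cfc (fun x => f x + g x) := by
  unfold Matrix.IsHermitian.cfc
  simp only [Unitary.conjStarAlgAut_apply, Unitary.coe_star]
  rw [← add_mul, ← mul_add, diagonal_add]
  have : (fun i => ((RCLike.ofReal : ℝ → ℂ) ∘ f ∘ hA.eigenvalues) i + ((RCLike.ofReal : ℝ → ℂ) ∘ g ∘ hA.eigenvalues) i)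
      = (RCLike.ofReal : ℝ → ℂ) ∘ (fun x => f x + g x) ∘ hA.eigenvalues := by
    funext i; simp [Function.comp]
  rw [this]

lemma cfc_sub {A : Matrix n n ℂ} (hA : A.IsHermitian) (f g : ℝ → ℝ) :
    hA.cfc f - hA.cfc g = hA.cfc (fun x => f x - g x) := by
  unfold Matrix.IsHermitian.cfc
  simp only [Unitary.conjStarAlgAut_apply, Unitary.coe_star]
  rw [← sub_mul, ← mul_sub, diagonal_sub]
  have : (fun i => ((RCLike.ofReal : ℝ → ℂ) ∘ f ∘ hA.eigenvalues) i - ((RCLike.ofReal : ℝ → ℂ) ∘ g ∘ hA.eigenvalues) i)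
      = (RCLike.ofReal : ℝ → ℂ) ∘ (fun x => f x - g x) ∘ hA.eigenvalues := by
    funext i; simp [Function.comp]
  rw [this]

lemma cfc_congr {A : Matrix n n ℂ} (hA : A.IsHermitian) {f g : ℝ → ℝ}
    (h : ∀ i, f (hA.eigenvalues i) = g (hA.eigenvalues i)) : hA.cfc f = hA.cfc g := by
  unfold Matrix.IsHermitian.cfc
  simp only [Unitary.conjStarAlgAut_apply, Unitary.coe_star]
  have : (RCLike.ofReal : ℝ → ℂ) ∘ f ∘ hA.eigenvalues = (RCLike.ofReal : ℝ → ℂ) ∘ g ∘ hA.eigenvalues := by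
    funext i; simp [Function.comp, h i]
  rw [this]

lemma cfc_one {A : Matrix n n ℂ} (hA : A.IsHermitian) : hA.cfc (fun _ => 1) = 1 := by
  unfold Matrix.IsHermitian.cfc
  simp only [Unitary.conjStarAlgAut_apply, Unitary.coe_star]
  have : diagonal ((RCLike.ofReal : ℝ → ℂ) ∘ (fun (_ : ℝ) => (1:ℝ)) ∘ hA.eigenvalues) = (1 : Matrix n n ℂ) := by
    have : ((RCLike.ofReal : ℝ → ℂ) ∘ (fun (_ : ℝ) => (1:ℝ)) ∘ hA.eigenvalues) = fun _ => 1 := by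
      funext i; simp [Function.comp]
    rw [this, diagonal_one]
  rw [this, mul_one]
  exact hA.eigenvectorUnitary.2.2

lemma cfc_id {A : Matrix n n ℂ} (hA : A.IsHermitian) : hA.cfc (fun x => x) = A :=
  (hA.spectral_theorem).symm

lemma cfc_posSemidef {A : Matrix n n ℂ} (hA : A.IsHermitian) {f : ℝ → ℝ}
    (h : ∀ i, 0 ≤ f (hA.eigenvalues i)) : (hA.cfc f).PosSemidef := by
  unfold Matrix.IsHermitian.cfc
  simp only [Unitary.conjStarAlgAut_apply, Unitary.coe_star]
  rw [Matrix.star_eq_conjTranspose]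
  exact (Matrix.posSemidef_diagonal_iff.mpr (fun i => by
    simp only [Function.comp_apply]
    exact RCLike.ofReal_nonneg.mpr (h i))).mul_mul_conjTranspose_same _


local notation "⟪" x ", " y "⟫" => @inner ℂ _ _ x y

/-- quadratic form of a Hermitian matrix expanded in its eigenbasis -/
lemma quad_expansion {M : Matrix n n ℂ} (hM : M.IsHermitian) (x : EuclideanSpace ℂ n) :
    (star (x : n → ℂ) ⬝ᵥ (M *ᵥ (x : n → ℂ))).re =
      ∑ j, ‖⟪hM.eigenvectorBasis j, x⟫‖^2 * hM.eigenvalues j := by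
  set y : EuclideanSpace ℂ n := WithLp.toLp 2 (M *ᵥ (x : n → ℂ) : n → ℂ)
  have h0 : star (x : n → ℂ) ⬝ᵥ (M *ᵥ (x : n → ℂ)) = ⟪x, y⟫ :=
    ((EuclideanSpace.inner_eq_star_dotProduct _ _).trans (dotProduct_comm _ _)).symm
  have h1 : ⟪x, y⟫ = ∑ j, ⟪x, hM.eigenvectorBasis j⟫ * ⟪hM.eigenvectorBasis j, y⟫ :=
    (hM.eigenvectorBasis.sum_inner_mul_inner x y).symm
  have h2 : ∀ j, ⟪hM.eigenvectorBasis j, y⟫ = (hM.eigenvalues j : ℂ) * ⟪hM.eigenvectorBasis j, x⟫ := by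
    intro j
    have hv : star (⇑(hM.eigenvectorBasis j)) ᵥ* M = star (M *ᵥ ⇑(hM.eigenvectorBasis j)) := by
      rw [Matrix.star_mulVec, hM.eq]
    have : ⟪hM.eigenvectorBasis j, y⟫
        = star (⇑(hM.eigenvectorBasis j)) ⬝ᵥ (M *ᵥ (x : n → ℂ)) :=
        (EuclideanSpace.inner_eq_star_dotProduct _ _).trans (dotProduct_comm _ _)
    rw [this, Matrix.dotProduct_mulVec, hv, hM.mulVec_eigenvectorBasis]
    show star (hM.eigenvalues j • ⇑(hM.eigenvectorBasis j)) ⬝ᵥ (x : n → ℂ) = _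
    rw [star_smul, star_trivial, smul_dotProduct]
    rw [dotProduct_comm, ← EuclideanSpace.inner_eq_star_dotProduct]
    rw [Complex.real_smul]
  rw [h0, h1]
  rw [show ∑ j, ⟪x, hM.eigenvectorBasis j⟫ * ⟪hM.eigenvectorBasis j, y⟫
      = ∑ j, (‖⟪hM.eigenvectorBasis j, x⟫‖^2 * hM.eigenvalues j : ℂ) from
    Finset.sum_congr rfl (fun j _ => by
      rw [h2 j, ← inner_conj_symm x (hM.eigenvectorBasis j)]
      rw [show ∀ (z w : ℂ), conj z * (w * z) = (conj z * z) * w from fun z w => by ring,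
        RCLike.conj_mul]
      norm_cast
      exact (Complex.ofReal_mul _ _).symm)]
  rw [Complex.re_sum]
  simp [← Complex.ofReal_pow]

/-- Parseval-type: row sums of |<v_j, x>|^2 -/
lemma sum_normsq_inner (b : OrthonormalBasis n ℂ (EuclideanSpace ℂ n)) (x : EuclideanSpace ℂ n) :
    ∑ j, ‖⟪b j, x⟫‖^2 = ‖x‖^2 := by
  have h1 := b.sum_inner_mul_inner x x
  have h2 : ∀ j, ⟪x, b j⟫ * ⟪b j, x⟫ = (‖⟪b j, x⟫‖^2 : ℂ) := by
    intro j
    rw [← inner_conj_symm x (b j), RCLike.conj_mul]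
    norm_num
  rw [Finset.sum_congr rfl (fun j _ => h2 j)] at h1
  have h3 : ⟪x, x⟫ = (‖x‖^2 : ℂ) := by
    rw [inner_self_eq_norm_sq_to_K]; norm_num
  rw [h3] at h1
  exact_mod_cast h1


lemma gibbs_scalar {p r : n → ℝ} (hp0 : ∀ i, 0 ≤ p i) (hp1 : ∑ i, p i = 1)
    (hr : ∀ i, 0 < r i) :
    ∑ i, (p i * Real.log (r i) - p i * Real.log (p i)) ≤ Real.log (∑ i, r i) := by
  have hne : (Finset.univ : Finset n).Nonempty := by
    by_contra h
    rw [Finset.not_nonempty_iff_eq_empty] at h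
    rw [h, Finset.sum_empty] at hp1
    norm_num at hp1
  have hZ : 0 < ∑ i, r i := Finset.sum_pos (fun i _ => hr i) hne
  set Z := ∑ i, r i with hZdef
  have key : ∀ i, p i * Real.log (r i) - p i * Real.log (p i) - p i * Real.log Z
      ≤ r i / Z - p i := by
    intro i
    rcases eq_or_lt_of_le (hp0 i) with h|h
    · rw [← h]
      simp only [zero_mul, sub_zero, zero_sub, neg_zero, sub_zero]
      exact div_nonneg (hr i).le hZ.le
    · have hx : 0 < r i / (p i * Z) := div_pos (hr i) (mul_pos h hZ)
      have hlog1 := Real.log_le_sub_one_of_pos hx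
      have hlog : Real.log (r i / (p i * Z)) = Real.log (r i) - Real.log (p i) - Real.log Z := by
        rw [Real.log_div (ne_of_gt (hr i)) (mul_pos h hZ).ne',
          Real.log_mul (ne_of_gt h) (ne_of_gt hZ)]
        ring
      have h1 : p i * Real.log (r i / (p i * Z)) ≤ p i * (r i / (p i * Z) - 1) :=
        mul_le_mul_of_nonneg_left hlog1 (le_of_lt h)
      have h2 : p i * (r i / (p i * Z) - 1) = r i / Z - p i := by
        field_simp
      have h3 : p i * Real.log (r i) - p i * Real.log (p i) - p i * Real.log Z
          = p i * Real.log (r i / (p i * Z)) := by rw [hlog]; ring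
      linarith
  have hsum := Finset.sum_le_sum (s := Finset.univ) (fun i _ => key i)
  have e1 : ∑ i, (p i * Real.log (r i) - p i * Real.log (p i) - p i * Real.log Z)
      = (∑ i, (p i * Real.log (r i) - p i * Real.log (p i))) - Real.log Z := by
    rw [Finset.sum_sub_distrib, ← Finset.sum_mul, hp1, one_mul]
  have e2 : ∑ i, (r i / Z - p i) = 0 := by
    rw [Finset.sum_sub_distrib, ← Finset.sum_div, hp1, ← hZdef, div_self (ne_of_gt hZ)]
    ring
  rw [e1] at hsum
  rw [e2] at hsum
  linarith

lemma jensen_exp {c a : n → ℝ} (h0 : ∀ i, 0 ≤ c i) (h1 : ∑ i, c i = 1) :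
    ∑ i, c i * a i ≤ Real.log (∑ i, c i * Real.exp (a i)) := by
  have hj := convexOn_exp.map_sum_le (t := Finset.univ) (w := c) (p := a)
    (fun i _ => h0 i) h1 (fun i _ => trivial)
  simp only [smul_eq_mul] at hj
  have hS : 0 < ∑ i, c i * Real.exp (a i) :=
    lt_of_lt_of_le (Real.exp_pos _) hj
  calc ∑ i, c i * a i = Real.log (Real.exp (∑ i, c i * a i)) := (Real.log_exp _).symm
    _ ≤ Real.log (∑ i, c i * Real.exp (a i)) := Real.log_le_log (Real.exp_pos _) hj

lemma entropy_ineq {p : n → ℝ} {c : n → n → ℝ} {a : n → ℝ}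
    (hp0 : ∀ i, 0 ≤ p i) (hp1 : ∑ i, p i = 1)
    (hc0 : ∀ i j, 0 ≤ c i j) (hrow : ∀ i, ∑ j, c i j = 1) (hcol : ∀ j, ∑ i, c i j = 1) :
    ∑ i, p i * (∑ j, c i j * a j) - ∑ i, p i * Real.log (p i)
      ≤ Real.log (∑ j, Real.exp (a j)) := by
  set r : n → ℝ := fun i => ∑ j, c i j * Real.exp (a j) with hrdef
  have hr : ∀ i, 0 < r i := by
    intro i
    have hex : ∃ j, 0 < c i j := by
      by_contra hcon
      push_neg at hcon
      have : ∀ j, c i j = 0 := fun j => le_antisymm (hcon j) (hc0 i j)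
      have h0' : ∑ j, c i j = 0 := Finset.sum_eq_zero (fun j _ => this j)
      rw [hrow i] at h0'
      norm_num at h0'
    obtain ⟨j, hj⟩ := hex
    refine Finset.sum_pos' (fun k _ => mul_nonneg (hc0 i k) (Real.exp_pos _).le)
      ⟨j, Finset.mem_univ j, mul_pos hj (Real.exp_pos _)⟩
  have hstep : ∀ i, ∑ j, c i j * a j ≤ Real.log (r i) := fun i =>
    jensen_exp (fun j => hc0 i j) (hrow i)
  have h1 : ∑ i, p i * (∑ j, c i j * a j) ≤ ∑ i, p i * Real.log (r i) :=
    Finset.sum_le_sum (fun i _ => mul_le_mul_of_nonneg_left (hstep i) (hp0 i))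
  have h2 : ∑ i, r i = ∑ j, Real.exp (a j) := by
    rw [hrdef]
    rw [Finset.sum_comm]
    exact Finset.sum_congr rfl (fun j _ => by rw [← Finset.sum_mul, hcol j, one_mul])
  have h3 := gibbs_scalar hp0 hp1 hr
  rw [Finset.sum_sub_distrib] at h3
  rw [h2] at h3
  linarith


lemma key_psd {A B : Matrix n n ℂ} (hA : A.PosDef) (hB : B.PosDef) :
    (A + B - (wgmean hA hB (1/2) + wgmean hA hB (1/2))).PosSemidef := by
  set P := mpow hA.1 (1/2) with hPdef
  set Q := mpow hA.1 (-(1/2)) with hQdef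
  have hC : (Q * B * Q).IsHermitian := mul_mul_isHermitian (mpow_isHermitian hA.1 (-(1/2))) hB.1
  set C := Q * B * Q with hCdef
  have hQH : Qᴴ = Q := (mpow_isHermitian hA.1 (-(1/2))).eq
  have hPH : Pᴴ = P := (mpow_isHermitian hA.1 (1/2)).eq
  have hCpsd : C.PosSemidef := by
    have := hB.posSemidef.mul_mul_conjTranspose_same Q
    rwa [hQH] at this
  have heig := fun i => hA.eigenvalues_pos i
  have hPQ : P * Q = 1 := by
    rw [hPdef, hQdef, mpow, mpow, cfc_mul]
    rw [cfc_congr hA.1 (g := fun _ => 1) (fun i => by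
      have hx := heig i
      rw [← Real.rpow_add hx, add_neg_cancel, Real.rpow_zero])]
    exact cfc_one hA.1
  have hQP : Q * P = 1 := by
    rw [hPdef, hQdef, mpow, mpow, cfc_mul]
    rw [cfc_congr hA.1 (g := fun _ => 1) (fun i => by
      have hx := heig i
      rw [← Real.rpow_add hx, neg_add_cancel, Real.rpow_zero])]
    exact cfc_one hA.1
  have hPP : P * P = A := by
    rw [hPdef, mpow, cfc_mul]
    rw [cfc_congr hA.1 (g := fun x => x) (fun i => by
      have hx := heig i
      rw [← Real.rpow_add hx]
      norm_num)]
    exact cfc_id hA.1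
  set S := mpow hC (1/2) with hSdef
  set D := hC.cfc (fun x => 1 + x - (x ^ ((1:ℝ)/2) + x ^ ((1:ℝ)/2))) with hDdef
  have hDpsd : D.PosSemidef := by
    apply cfc_posSemidef
    intro i
    have hx : 0 ≤ hC.eigenvalues i := hCpsd.eigenvalues_nonneg i
    have hs : hC.eigenvalues i ^ ((1:ℝ)/2) = Real.sqrt (hC.eigenvalues i) :=
      (Real.sqrt_eq_rpow _).symm
    rw [hs]
    nlinarith [sq_nonneg (1 - Real.sqrt (hC.eigenvalues i)), Real.sq_sqrt hx,
      Real.sqrt_nonneg (hC.eigenvalues i)]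
  have hDeq : D = 1 + C - (S + S) := by
    rw [hDdef, hSdef, mpow]
    calc hC.cfc (fun x => 1 + x - (x ^ ((1:ℝ)/2) + x ^ ((1:ℝ)/2)))
        = hC.cfc (fun _ => 1) + hC.cfc (fun x => x)
            - hC.cfc (fun x => x ^ ((1:ℝ)/2) + x ^ ((1:ℝ)/2)) := by
          rw [cfc_add hC, cfc_sub hC]
      _ = 1 + C - ((hC.cfc fun x => x ^ ((1:ℝ)/2)) + hC.cfc fun x => x ^ ((1:ℝ)/2)) := by
          rw [cfc_one, cfc_id, cfc_add hC]
  have hGsplit : wgmean hA hB (1/2) = P * S * P := rfl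
  have hmain : A + B - (wgmean hA hB (1/2) + wgmean hA hB (1/2)) = P * D * P := by
    rw [hGsplit, hDeq]
    have hB' : P * C * P = B := by
      have : P * C * P = (P * Q) * B * (Q * P) := by
        rw [hCdef]; noncomm_ring
      rw [this, hPQ, hQP, one_mul, mul_one]
    have expand : P * (1 + C - (S + S)) * P = P * P + P * C * P - (P * S * P + P * S * P) := by
      noncomm_ring
    rw [expand, hPP, hB']
  rw [hmain]
  have := hDpsd.mul_mul_conjTranspose_same P
  rwa [hPH] at this


/-- `A ↦ log ∑ᵢ exp(λᵢ(A))` is geodesically midpoint convex. -/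
theorem log_sum_exp_eig_gconvex {A B : Matrix n n ℂ} (hA : A.PosDef) (hB : B.PosDef) :
    Real.log (∑ i, Real.exp ((wgmean_isHermitian hA hB (1/2)).eigenvalues i)) ≤
      (1/2) * Real.log (∑ i, Real.exp (hA.1.eigenvalues i)) +
      (1/2) * Real.log (∑ i, Real.exp (hB.1.eigenvalues i)) := by

  rcases isEmpty_or_nonempty n with hn | hn
  · simp
  set hG := wgmean_isHermitian hA hB (1/2) with hGdef
  set lam : n → ℝ := hG.eigenvalues with hlam
  set u : n → EuclideanSpace ℂ n := fun i => hG.eigenvectorBasis i with hu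
  set Z : ℝ := ∑ i, Real.exp (lam i) with hZ
  have hZpos : 0 < Z := Finset.sum_pos (fun i _ => Real.exp_pos _) univ_nonempty
  set p : n → ℝ := fun i => Real.exp (lam i) / Z with hp
  have hp0 : ∀ i, 0 ≤ p i := fun i => div_nonneg (Real.exp_pos _).le hZpos.le
  have hppos : ∀ i, 0 < p i := fun i => div_pos (Real.exp_pos _) hZpos
  have hp1 : ∑ i, p i = 1 := by
    rw [hp, ← Finset.sum_div, ← hZ, div_self hZpos.ne']
  -- quadratic forms
  set w : Matrix n n ℂ → n → ℝ := fun M i => (star (⇑(u i) : n → ℂ) ⬝ᵥ (M *ᵥ (⇑(u i) : n → ℂ))).re with hw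
  -- w of G is the eigenvalue
  have hnorm1 : ∀ i, ‖u i‖ = 1 := fun i => hG.eigenvectorBasis.orthonormal.1 i
  have hwG : ∀ i, w (wgmean hA hB (1/2)) i = lam i := by
    intro i
    rw [hw]
    simp only
    rw [hG.mulVec_eigenvectorBasis, dotProduct_smul]
    have hself : (star (⇑(u i) : n → ℂ) ⬝ᵥ (⇑(u i) : n → ℂ)) = ((‖u i‖^2 : ℝ) : ℂ) := by
      rw [show (star (⇑(u i) : n → ℂ) ⬝ᵥ (⇑(u i) : n → ℂ)) = ⟪u i, u i⟫ from
          ((EuclideanSpace.inner_eq_star_dotProduct _ _).trans (dotProduct_comm _ _)).symm,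
        inner_self_eq_norm_sq_to_K]
      norm_cast
    rw [hself, hnorm1 i]
    norm_num
    rfl
  -- Loewner inequality
  have hwmid : ∀ i, w (wgmean hA hB (1/2)) i + w (wgmean hA hB (1/2)) i ≤ w A i + w B i := by
    intro i
    have h0 := (key_psd hA hB).dotProduct_mulVec_nonneg (⇑(u i) : n → ℂ)
    have h1 : 0 ≤ (star (⇑(u i) : n → ℂ) ⬝ᵥ
        ((A + B - (wgmean hA hB (1/2) + wgmean hA hB (1/2))) *ᵥ (⇑(u i) : n → ℂ))).re :=
      (Complex.le_def.mp h0).1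
    rw [Matrix.sub_mulVec, Matrix.add_mulVec, Matrix.add_mulVec, dotProduct_sub,
      dotProduct_add, dotProduct_add, Complex.sub_re, Complex.add_re, Complex.add_re] at h1
    rw [hw]; simp only
    linarith
  -- Gibbs inequality applied to A and to B
  have hgibbs : ∀ (M : Matrix n n ℂ) (hM : M.IsHermitian),
      ∑ i, p i * w M i - ∑ i, p i * Real.log (p i)
        ≤ Real.log (∑ j, Real.exp (hM.eigenvalues j)) := by
    intro M hM
    have hexp : ∀ i, w M i = ∑ j, ‖⟪hM.eigenvectorBasis j, u i⟫‖^2 * hM.eigenvalues j :=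
      fun i => quad_expansion hM (u i)
    have hrw : ∑ i, p i * w M i
        = ∑ i, p i * (∑ j, (fun i j => ‖⟪hM.eigenvectorBasis j, u i⟫‖^2) i j * hM.eigenvalues j) := by
      exact Finset.sum_congr rfl (fun i _ => by rw [hexp i])
    rw [hrw]
    refine entropy_ineq hp0 hp1 (fun i j => by positivity) (fun i => ?_) (fun j => ?_)
    · exact sum_normsq_inner hM.eigenvectorBasis (u i) |>.trans (by rw [hnorm1 i]; norm_num)
    · have := sum_normsq_inner hG.eigenvectorBasis (hM.eigenvectorBasis j)
      rw [show (∑ i, ‖⟪hG.eigenvectorBasis i, hM.eigenvectorBasis j⟫‖^2)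
          = ∑ i, ‖⟪hM.eigenvectorBasis j, u i⟫‖^2 from
        Finset.sum_congr rfl (fun i _ => by rw [← norm_inner_symm])] at this
      rw [this, hM.eigenvectorBasis.orthonormal.1 j]
      norm_num
  -- entropy identity for G
  have hlogp : ∀ i, Real.log (p i) = lam i - Real.log Z := by
    intro i
    rw [hp]
    simp only
    rw [Real.log_div (Real.exp_pos _).ne' hZpos.ne', Real.log_exp]
  have hident : Real.log Z = ∑ i, p i * lam i - ∑ i, p i * Real.log (p i) := by
    have : ∑ i, p i * Real.log (p i) = ∑ i, p i * lam i - Real.log Z := by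
      rw [show ∑ i, p i * Real.log (p i) = ∑ i, (p i * lam i - p i * Real.log Z) from
        Finset.sum_congr rfl (fun i _ => by rw [hlogp i]; ring),
        Finset.sum_sub_distrib, ← Finset.sum_mul, hp1, one_mul]
    linarith
  -- midpoint bound on ∑ p lam
  have hmid : ∑ i, p i * lam i + ∑ i, p i * lam i ≤ ∑ i, p i * w A i + ∑ i, p i * w B i := by
    have : ∀ i, p i * lam i + p i * lam i ≤ p i * w A i + p i * w B i := by
      intro i
      have := hwmid i
      rw [hwG i] at this
      nlinarith [hp0 i]
    have h := Finset.sum_le_sum (s := Finset.univ) (fun i _ => this i)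
    rw [Finset.sum_add_distrib, Finset.sum_add_distrib] at h
    exact h
  have hA' := hgibbs A hA.1
  have hB' := hgibbs B hB.1
  rw [hident]
  linarith
end CGO
end

section
/- The Thompson metric contracts under positive translation: for Hermitian positive definite X, Y and positive semidefinite A with λ_min(A) = β and α = max{‖X‖,‖Y‖}, δ_T(X+A, Y+A) ≤ (α/(α+β)) δ_T(X,Y). -/
/-!
If `X ≤ eᵗ Y` with `t = δ_T(X, Y) ≥ 0`, split `X = θ X + (1 - θ) X` with `θ = e^{ct - t}`,
`c = α / (α + β)`: the first part is below `e^{ct} Y`, the second below `(1 - θ) α`, and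
`A ≥ β` absorbs the constant, because `(1 - θ) α ≤ (e^{ct} - 1) β` is Jensen's inequality for
`exp` at the points `ct` and `ct - t`, whose barycentre with weights `β/(α+β)`, `α/(α+β)` is `0`.
Hence `X + A ≤ e^{ct} (Y + A)`, and symmetrically with `X` and `Y` exchanged.
-/

set_option linter.unusedSectionVars false

namespace CGO

open Matrix
open scoped ComplexOrder

variable {n : Type*} [Fintype n] [DecidableEq n]

/-- `wfac A B = W(A/B) = inf {λ > 0 : A ⪯ λ B}`. -/
noncomputable def wfac (A B : Matrix n n ℂ) : ℝ :=
  sInf {l : ℝ | 0 < l ∧ ((l : ℝ) • B - A).PosSemidef}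

/-- The Thompson part metric on positive definite matrices,
`δ_T(A,B) = ‖log(B^{-1/2} A B^{-1/2})‖ = max (log W(A/B)) (log W(B/A))`. -/
noncomputable def thompson (A B : Matrix n n ℂ) : ℝ :=
  max (Real.log (wfac A B)) (Real.log (wfac B A))

-- `A ≤ B` is `(B - A).PosSemidef`, so `wfac A B = sInf {l | 0 < l ∧ A ≤ l • B}` definitionally.
open scoped MatrixOrder
open Real

theorem add_le_mul_exp_add_mul_exp {α β : ℝ} (hα : 0 ≤ α) (hβ : 0 ≤ β) (hαβ : 0 < α + β)
    (s : ℝ) : α + β ≤ β * exp (α / (α + β) * s) + α * exp (α / (α + β) * s - s) := by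
  have key := convexOn_exp.2 (Set.mem_univ (α / (α + β) * s)) (Set.mem_univ (α / (α + β) * s - s))
    (div_nonneg hβ hαβ.le) (div_nonneg hα hαβ.le)
    (by rw [← add_div, add_comm, div_self hαβ.ne'])
  have hzero : β / (α + β) * (α / (α + β) * s) + α / (α + β) * (α / (α + β) * s - s) = 0 := by
    field_simp; ring
  simp only [smul_eq_mul] at key
  rw [hzero, exp_zero] at key
  rw [← one_le_div hαβ]
  exact key.trans_eq (by ring)

section

variable {𝕜 : Type*} [RCLike 𝕜]

omit [DecidableEq n] in
theorem isClosed_setOf_posSemidef : IsClosed {M : Matrix n n 𝕜 | M.PosSemidef} := by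
  simp only [posSemidef_iff_dotProduct_mulVec, Set.ofPred_and, Set.ofPred_forall]
  exact (isClosed_eq continuous_id.matrix_conjTranspose continuous_id).inter
    (isClosed_iInter fun x => isClosed_le continuous_const (by fun_prop))

omit [DecidableEq n] in
theorem le_of_smul_le_smul_of_posDef [Nonempty n] {X : Matrix n n 𝕜} (hX : X.PosDef) {a b : ℝ}
    (h : a • X ≤ b • X) : a ≤ b := by
  have htrace := (le_iff.mp h).trace_nonneg
  rw [← sub_smul, trace_smul] at htrace
  exact sub_nonneg.mp (nonneg_of_smul_nonneg_of_pos_right htrace hX.trace_pos)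

theorem le_smul_one_of_eigenvalues_le {M : Matrix n n 𝕜} (hM : M.IsHermitian) {r : ℝ}
    (h : ∀ i, hM.eigenvalues i ≤ r) : M ≤ r • 1 := by
  rw [← Algebra.algebraMap_eq_smul_one, le_algebraMap_iff_spectrum_le hM.isSelfAdjoint]
  simpa [hM.spectrum_real_eq_range_eigenvalues] using h

theorem smul_one_le_of_le_eigenvalues {M : Matrix n n 𝕜} (hM : M.IsHermitian) {r : ℝ}
    (h : ∀ i, r ≤ hM.eigenvalues i) : r • 1 ≤ M := by
  rw [← Algebra.algebraMap_eq_smul_one, algebraMap_le_iff_le_spectrum hM.isSelfAdjoint]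
  simpa [hM.spectrum_real_eq_range_eigenvalues] using h

theorem add_le_exp_smul_add {X Y A : Matrix n n 𝕜} {α β s : ℝ}
    (hα : 0 < α) (hβ : 0 ≤ β) (hs : 0 ≤ s) (hXY : X ≤ exp s • Y) (hXα : X ≤ α • 1)
    (hAβ : β • 1 ≤ A) : X + A ≤ exp (α / (α + β) * s) • (Y + A) := by
  set c := α / (α + β)
  set θ := exp (c * s - s)
  set μ := exp (c * s)
  have hc : c ≤ 1 := div_le_one_of_le₀ (by linarith) (by linarith)
  have hθ : θ ≤ 1 := exp_le_one_iff.mpr (by nlinarith)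
  have hμ : 1 ≤ μ := one_le_exp (by positivity)
  have hθμ : θ * exp s = μ := by rw [← exp_add, sub_add_cancel]
  have hsurplus : (1 - θ) * α ≤ (μ - 1) * β := by
    have := add_le_mul_exp_add_mul_exp hα.le hβ (by linarith) s
    linarith
  calc X + A = θ • X + (1 - θ) • X + A := by module
    _ ≤ θ • (exp s • Y) + (1 - θ) • (α • 1) + A := by gcongr
    _ = μ • Y + ((1 - θ) * α) • 1 + A := by rw [smul_smul, hθμ, smul_smul]
    _ ≤ μ • Y + ((μ - 1) * β) • 1 + A := by gcongr
    _ = μ • Y + (μ - 1) • (β • 1) + A := by rw [smul_smul]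
    _ ≤ μ • Y + (μ - 1) • A + A := by gcongr
    _ = μ • (Y + A) := by module

end

theorem wfac_nonneg (X Y : Matrix n n ℂ) : 0 ≤ wfac X Y :=
  Real.sInf_nonneg fun _ hl => hl.1.le

theorem wfac_le {X Y : Matrix n n ℂ} {l : ℝ} (hl : 0 < l) (h : X ≤ l • Y) : wfac X Y ≤ l :=
  csInf_le ⟨0, fun _ hl => hl.1.le⟩ ⟨hl, h⟩

theorem wfac_of_isEmpty [IsEmpty n] (X Y : Matrix n n ℂ) : wfac X Y = 0 := by
  have hS : {l : ℝ | 0 < l ∧ X ≤ l • Y} = Set.Ioi 0 := by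
    simp only [le_of_subsingleton, and_true, Set.Ioi]
  show sInf {l : ℝ | 0 < l ∧ X ≤ l • Y} = 0
  rw [hS, csInf_Ioi]

theorem exists_pos_le_smul [Nonempty n] {X Y : Matrix n n ℂ} (hX : X.PosDef) (hY : Y.PosDef) :
    ∃ l : ℝ, 0 < l ∧ X ≤ l • Y := by
  obtain ⟨i, hi⟩ := Finite.exists_max hX.1.eigenvalues
  obtain ⟨j, hj⟩ := Finite.exists_min hY.1.eigenvalues
  have hXi := hX.eigenvalues_pos i
  have hYj := hY.eigenvalues_pos j
  refine ⟨hX.1.eigenvalues i / hY.1.eigenvalues j, by positivity, ?_⟩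
  calc X ≤ hX.1.eigenvalues i • 1 := le_smul_one_of_eigenvalues_le hX.1 hi
    _ = (hX.1.eigenvalues i / hY.1.eigenvalues j) • hY.1.eigenvalues j • (1 : Matrix n n ℂ) := by
      rw [smul_smul, div_mul_cancel₀ _ hYj.ne']
    _ ≤ _ := by gcongr; exact smul_one_le_of_le_eigenvalues hY.1 hj

theorem le_wfac_smul [Nonempty n] {X Y : Matrix n n ℂ} (hX : X.PosDef) (hY : Y.PosDef) :
    X ≤ wfac X Y • Y := by
  have hclosed : IsClosed {l : ℝ | X ≤ l • Y} :=
    isClosed_setOf_posSemidef.preimage (by fun_prop)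
  obtain ⟨l, hl⟩ := exists_pos_le_smul hX hY
  exact closure_minimal (fun l hl => hl.2) hclosed
    (csInf_mem_closure (s := {l : ℝ | 0 < l ∧ X ≤ l • Y}) ⟨l, hl⟩ ⟨0, fun _ hl => hl.1.le⟩)

theorem one_le_wfac_mul_wfac [Nonempty n] {X Y : Matrix n n ℂ} (hX : X.PosDef) (hY : Y.PosDef) :
    1 ≤ wfac X Y * wfac Y X := by
  refine le_of_smul_le_smul_of_posDef hX ?_
  calc (1 : ℝ) • X = X := one_smul _ _
    _ ≤ wfac X Y • Y := le_wfac_smul hX hY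
    _ ≤ wfac X Y • wfac Y X • X := by gcongr; exacts [wfac_nonneg _ _, le_wfac_smul hY hX]
    _ = _ := smul_smul _ _ _

theorem wfac_pos [Nonempty n] {X Y : Matrix n n ℂ} (hX : X.PosDef) (hY : Y.PosDef) :
    0 < wfac X Y :=
  pos_of_mul_pos_left (one_pos.trans_le (one_le_wfac_mul_wfac hX hY)) (wfac_nonneg _ _)

theorem thompson_comm (X Y : Matrix n n ℂ) : thompson X Y = thompson Y X :=
  max_comm _ _

theorem thompson_nonneg [Nonempty n] {X Y : Matrix n n ℂ} (hX : X.PosDef) (hY : Y.PosDef) :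
    0 ≤ thompson X Y := by
  have hsum : 0 ≤ log (wfac X Y) + log (wfac Y X) := by
    rw [← log_mul (wfac_pos hX hY).ne' (wfac_pos hY hX).ne']
    exact log_nonneg (one_le_wfac_mul_wfac hX hY)
  unfold thompson
  by_contra! h
  linarith [max_lt_iff.mp h]

theorem le_exp_thompson_smul [Nonempty n] {X Y : Matrix n n ℂ} (hX : X.PosDef) (hY : Y.PosDef) :
    X ≤ exp (thompson X Y) • Y :=
  calc X ≤ wfac X Y • Y := le_wfac_smul hX hY
    _ ≤ exp (thompson X Y) • Y := by
      gcongr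
      · exact hY.posSemidef.nonneg
      · rw [← log_le_iff_le_exp (wfac_pos hX hY)]
        exact le_max_left _ _

theorem log_wfac_add_le [Nonempty n] {X Y A : Matrix n n ℂ} (hX : X.PosDef) (hY : Y.PosDef)
    {α β : ℝ} (hα : 0 < α) (hβ : 0 ≤ β) (hXα : X ≤ α • 1) (hAβ : β • 1 ≤ A) :
    log (wfac (X + A) (Y + A)) ≤ α / (α + β) * thompson X Y := by
  have hA : A.PosSemidef := (smul_nonneg hβ zero_le_one |>.trans hAβ).posSemidef
  rw [log_le_iff_le_exp (wfac_pos (hX.add_posSemidef hA) (hY.add_posSemidef hA))]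
  exact wfac_le (exp_pos _) <|
    add_le_exp_smul_add hα hβ (thompson_nonneg hX hY) (le_exp_thompson_smul hX hY) hXα hAβ

/-- The Thompson metric contracts under positive translations:
`δ_T(X+A, Y+A) ≤ (α/(α+β)) δ_T(X,Y)` with `α = max{‖X‖,‖Y‖}` (largest eigenvalue)
and `β = λ_min(A)`. -/
theorem thompson_translation_contraction {X Y A : Matrix n n ℂ}
    (hX : X.PosDef) (hY : Y.PosDef) (hA : A.PosSemidef) :
    thompson (X + A) (Y + A) ≤
      (max (⨆ i, hX.1.eigenvalues i) (⨆ i, hY.1.eigenvalues i) /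
        (max (⨆ i, hX.1.eigenvalues i) (⨆ i, hY.1.eigenvalues i) +
          ⨅ i, hA.1.eigenvalues i)) * thompson X Y := by
  rcases isEmpty_or_nonempty n with hn | hn
  · simp [thompson, wfac_of_isEmpty]
  set α := max (⨆ i, hX.1.eigenvalues i) (⨆ i, hY.1.eigenvalues i)
  set β := ⨅ i, hA.1.eigenvalues i
  have hXα : X ≤ α • 1 := le_smul_one_of_eigenvalues_le hX.1 fun i =>
    (le_ciSup (Finite.bddAbove_range _) i).trans (le_max_left _ _)
  have hYα : Y ≤ α • 1 := le_smul_one_of_eigenvalues_le hY.1 fun i =>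
    (le_ciSup (Finite.bddAbove_range _) i).trans (le_max_right _ _)
  have hα : 0 < α := (hX.eigenvalues_pos (Classical.arbitrary n)).trans_le
    ((le_ciSup (Finite.bddAbove_range _) _).trans (le_max_left _ _))
  have hβ : 0 ≤ β := le_ciInf hA.eigenvalues_nonneg
  have hAβ : β • 1 ≤ A := smul_one_le_of_le_eigenvalues hA.1 fun i =>
    ciInf_le (Finite.bddBelow_range _) i
  refine max_le (log_wfac_add_le hX hY hα hβ hXα hAβ) ?_
  rw [thompson_comm X Y]
  exact log_wfac_add_le hY hX hα hβ hYα hAβ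

end CGO
end

section
/- If c ≥ 0 and -1 < τ < 1, then g(x) = c·x + x^τ on (0,∞) is log-contractive: for all s ≠ t > 0, |log g(t) − log g(s)| < |log t − log s|. -/
/-! A positive function `f` on `(0,∞)` is log-contractive as soon as `f x / x` is strictly
decreasing and `x * f x` is strictly increasing: taking logarithms, these say that
`log f t - log f s` lies strictly between `-(log t - log s)` and `log t - log s` for `s < t`.
For `f x = c x + x^τ` we have `f x / x = c + x^(τ-1)` and `x f x = c x² + x^(τ+1)`, which are
monotone in the required directions exactly because `τ < 1` and `τ > -1`. -/

open Real Set

theorem abs_log_sub_log_lt_of_lt {f : ℝ → ℝ} (hf : ∀ x, 0 < x → 0 < f x)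
    (hdiv : StrictAntiOn (fun x => f x / x) (Ioi 0))
    (hmul : StrictMonoOn (fun x => x * f x) (Ioi 0)) {s t : ℝ} (hs : 0 < s) (hst : s < t) :
    |log (f t) - log (f s)| < log t - log s := by
  have ht : 0 < t := hs.trans hst
  have hdiv_log : log (f t / t) < log (f s / s) :=
    log_lt_log (div_pos (hf t ht) ht) (hdiv hs ht hst)
  have hmul_log : log (s * f s) < log (t * f t) :=
    log_lt_log (mul_pos hs (hf s hs)) (hmul hs ht hst)
  rw [log_div (hf t ht).ne' ht.ne', log_div (hf s hs).ne' hs.ne'] at hdiv_log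
  rw [log_mul hs.ne' (hf s hs).ne', log_mul ht.ne' (hf t ht).ne'] at hmul_log
  rw [abs_sub_lt_iff]
  constructor <;> linarith

theorem abs_log_sub_log_lt {f : ℝ → ℝ} (hf : ∀ x, 0 < x → 0 < f x)
    (hdiv : StrictAntiOn (fun x => f x / x) (Ioi 0))
    (hmul : StrictMonoOn (fun x => x * f x) (Ioi 0)) {s t : ℝ} (hs : 0 < s) (ht : 0 < t)
    (hst : s ≠ t) :
    |log (f t) - log (f s)| < |log t - log s| := by
  rcases hst.lt_or_gt with h | h
  · exact (abs_log_sub_log_lt_of_lt hf hdiv hmul hs h).trans_le (le_abs_self _)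
  · rw [abs_sub_comm (log t), abs_sub_comm (log (f t))]
    exact (abs_log_sub_log_lt_of_lt hf hdiv hmul ht h).trans_le (le_abs_self _)

theorem strictAntiOn_mul_add_rpow_div {c τ : ℝ} (hτ : τ < 1) :
    StrictAntiOn (fun x => (c * x + x ^ τ) / x) (Ioi 0) := by
  intro x (hx : 0 < x) y (hy : 0 < y) hxy
  have key : y ^ (τ - 1) < x ^ (τ - 1) := rpow_lt_rpow_of_neg hx hxy (by linarith)
  rw [rpow_sub_one hx.ne', rpow_sub_one hy.ne'] at key
  simp only [add_div, mul_div_cancel_right₀ c hx.ne', mul_div_cancel_right₀ c hy.ne']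
  linarith

theorem strictMonoOn_mul_mul_add_rpow {c τ : ℝ} (hc : 0 ≤ c) (hτ : -1 < τ) :
    StrictMonoOn (fun x => x * (c * x + x ^ τ)) (Ioi 0) := by
  intro x (hx : 0 < x) y (hy : 0 < y) hxy
  have key : x ^ (τ + 1) < y ^ (τ + 1) := rpow_lt_rpow hx.le hxy (by linarith)
  rw [rpow_add_one hx.ne', rpow_add_one hy.ne'] at key
  have hsq : c * (x * x) ≤ c * (y * y) := mul_le_mul_of_nonneg_left (mul_self_le_mul_self hx.le hxy.le) hc
  nlinarith

/-- If `c ≥ 0` and `-1 < τ < 1`, then `g(x) = c x + x^τ` is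
log-contractive on `(0,∞)`. -/
theorem log_contractive_c_mul_add_rpow {c : ℝ} (hc : 0 ≤ c) {τ : ℝ}
    (hτ : -1 < τ) (hτ' : τ < 1) {s t : ℝ} (hs : 0 < s) (ht : 0 < t) (hst : s ≠ t) :
    |Real.log (c * t + t ^ τ) - Real.log (c * s + s ^ τ)| <
      |Real.log t - Real.log s| :=
  abs_log_sub_log_lt (f := fun x => c * x + x ^ τ)
    (fun _ hx => add_pos_of_nonneg_of_pos (mul_nonneg hc hx.le) (rpow_pos_of_pos hx τ))
    (strictAntiOn_mul_add_rpow_div hτ') (strictMonoOn_mul_mul_add_rpow hc hτ) hs ht hst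
end
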